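/- Let A₁, A₂ be operators on ℂ³ (with standard basis e₀, e₁, e₂) defined by A₁e₀ = e₁/√2, A₂e₀ = e₂/√2, A₁e₁ = 0, A₂e₁ = e₁, A₁e₂ = e₂, A₂e₂ = 0. Then A₁*A₁ + A₂*A₂ = I, the subspaces ℂe₁ and ℂe₂ are invariant under both A₁ and A₂, but every nonzero vector of ℂ³ is cyclic for the *-algebra generated by A₁ and A₂ (i.e., the smallest subspace containing it that is invariant under A₁, A₂, A₁*, A₂* is all of ℂ³). -/
import Mathlib

open Matrix

noncomputable def A₁ex : Matrix (Fin 3) (Fin 3) ℂ :=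
  !![0, 0, 0; ((Real.sqrt 2 : ℂ))⁻¹, 0, 0; 0, 0, 1]

noncomputable def A₂ex : Matrix (Fin 3) (Fin 3) ℂ :=
  !![0, 0, 0; 0, 1, 0; ((Real.sqrt 2 : ℂ))⁻¹, 0, 0]

noncomputable def sC : ℂ := ((Real.sqrt 2 : ℂ))⁻¹

lemma sC_sq : sC * sC = 2⁻¹ := by
  rw [sC, ← mul_inv]
  norm_cast
  rw [Real.mul_self_sqrt (by norm_num)]
  norm_num

lemma sC_ne : sC ≠ 0 := by
  intro h
  have := sC_sq
  rw [h, mul_zero] at this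
  norm_num at this

lemma star_sC : (starRingEnd ℂ) sC = sC := by
  simp [sC]

lemma mv1 (x : Fin 3 → ℂ) : A₁ex.mulVec x = ![0, sC * x 0, x 2] := by
  funext i
  fin_cases i <;> simp [A₁ex, sC, Matrix.mulVec, dotProduct, Fin.sum_univ_three]

lemma mv2 (x : Fin 3 → ℂ) : A₂ex.mulVec x = ![0, x 1, sC * x 0] := by
  funext i
  fin_cases i <;> simp [A₂ex, sC, Matrix.mulVec, dotProduct, Fin.sum_univ_three]

lemma mv1h (x : Fin 3 → ℂ) : A₁exᴴ.mulVec x = ![sC * x 1, 0, x 2] := by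
  funext i
  fin_cases i <;>
    simp [A₁ex, sC, Matrix.mulVec, dotProduct, Fin.sum_univ_three,
      Matrix.conjTranspose_apply]

lemma mv2h (x : Fin 3 → ℂ) : A₂exᴴ.mulVec x = ![sC * x 2, x 1, 0] := by
  funext i
  fin_cases i <;>
    simp [A₂ex, sC, Matrix.mulVec, dotProduct, Fin.sum_univ_three,
      Matrix.conjTranspose_apply]

theorem reducible_module_irreducible_rep :
    (A₁exᴴ * A₁ex + A₂exᴴ * A₂ex = 1) ∧
    (∀ x ∈ Submodule.span ℂ {(Pi.single 1 1 : Fin 3 → ℂ)},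
        A₁ex.mulVec x ∈ Submodule.span ℂ {(Pi.single 1 1 : Fin 3 → ℂ)} ∧
        A₂ex.mulVec x ∈ Submodule.span ℂ {(Pi.single 1 1 : Fin 3 → ℂ)}) ∧
    (∀ x ∈ Submodule.span ℂ {(Pi.single 2 1 : Fin 3 → ℂ)},
        A₁ex.mulVec x ∈ Submodule.span ℂ {(Pi.single 2 1 : Fin 3 → ℂ)} ∧
        A₂ex.mulVec x ∈ Submodule.span ℂ {(Pi.single 2 1 : Fin 3 → ℂ)}) ∧
    (∀ x : Fin 3 → ℂ, x ≠ 0 → ∀ K : Submodule ℂ (Fin 3 → ℂ), x ∈ K →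
        (∀ y ∈ K, A₁ex.mulVec y ∈ K) → (∀ y ∈ K, A₂ex.mulVec y ∈ K) →
        (∀ y ∈ K, A₁exᴴ.mulVec y ∈ K) → (∀ y ∈ K, A₂exᴴ.mulVec y ∈ K) →
        K = ⊤) := by
  have e1single : (Pi.single 1 1 : Fin 3 → ℂ) = ![0, 1, 0] := by
    funext i; fin_cases i <;> simp
  have e2single : (Pi.single 2 1 : Fin 3 → ℂ) = ![0, 0, 1] := by
    funext i; fin_cases i <;> simp
  refine ⟨?_, ?_, ?_, ?_⟩
  · ext i j
    fin_cases i <;> fin_cases j <;>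
      simp [A₁ex, A₂ex, Matrix.mul_apply, Fin.sum_univ_three,
        Matrix.conjTranspose_apply, Matrix.one_apply, Complex.conj_ofReal]
    rw [show ((Real.sqrt 2 : ℂ))⁻¹ = sC from rfl, sC_sq]
    norm_num
  · intro x hx
    rw [Submodule.mem_span_singleton] at hx
    obtain ⟨c, rfl⟩ := hx
    constructor
    · rw [Submodule.mem_span_singleton]
      refine ⟨0, ?_⟩
      rw [mv1]
      funext i; fin_cases i <;> simp [e1single]
    · rw [Submodule.mem_span_singleton]
      refine ⟨c, ?_⟩
      rw [mv2]
      funext i; fin_cases i <;> simp [e1single]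
  · intro x hx
    rw [Submodule.mem_span_singleton] at hx
    obtain ⟨c, rfl⟩ := hx
    constructor
    · rw [Submodule.mem_span_singleton]
      refine ⟨c, ?_⟩
      rw [mv1]
      funext i; fin_cases i <;> simp [e2single]
    · rw [Submodule.mem_span_singleton]
      refine ⟨0, ?_⟩
      rw [mv2]
      funext i; fin_cases i <;> simp [e2single]
  · intro x hx K hxK h1 h2 h1s h2s
    -- extract e from scalar multiple membership
    have extract : ∀ (c : ℂ) (v : Fin 3 → ℂ), c ≠ 0 → c • v ∈ K → v ∈ K := by
      intro c v hc hm
      have := K.smul_mem c⁻¹ hm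
      rwa [smul_smul, inv_mul_cancel₀ hc, one_smul] at this
    -- e₀ ∈ K implies K = ⊤
    have key0 : (![1,0,0] : Fin 3 → ℂ) ∈ K → K = ⊤ := by
      intro he0
      have he1 : (![0,1,0] : Fin 3 → ℂ) ∈ K := by
        have h := h1 _ he0
        rw [mv1] at h
        refine extract sC _ sC_ne ?_
        convert h using 1
        funext i; fin_cases i <;> simp
      have he2 : (![0,0,1] : Fin 3 → ℂ) ∈ K := by
        have h := h2 _ he0
        rw [mv2] at h
        refine extract sC _ sC_ne ?_
        convert h using 1
        funext i; fin_cases i <;> simp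
      rw [eq_top_iff]
      intro v _
      have hv : v = v 0 • ![1,0,0] + v 1 • ![0,1,0] + v 2 • ![0,0,1] := by
        funext i; fin_cases i <;> simp
      rw [hv]
      exact K.add_mem (K.add_mem (K.smul_mem _ he0) (K.smul_mem _ he1)) (K.smul_mem _ he2)
    have key1 : (![0,1,0] : Fin 3 → ℂ) ∈ K → K = ⊤ := by
      intro he1
      apply key0
      have h := h1s _ he1
      rw [mv1h] at h
      refine extract sC _ sC_ne ?_
      convert h using 1
      funext i; fin_cases i <;> simp
    have key2 : (![0,0,1] : Fin 3 → ℂ) ∈ K → K = ⊤ := by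
      intro he2
      apply key0
      have h := h2s _ he2
      rw [mv2h] at h
      refine extract sC _ sC_ne ?_
      convert h using 1
      funext i; fin_cases i <;> simp
    by_cases hx1 : x 1 = 0
    · by_cases hx2 : x 2 = 0
      · -- x = x 0 • e₀, x 0 ≠ 0
        have hx0 : x 0 ≠ 0 := by
          intro h0
          apply hx
          funext i; fin_cases i <;> simp [h0, hx1, hx2]
        apply key0
        refine extract (x 0) _ hx0 ?_
        convert hxK using 1
        funext i; fin_cases i <;> simp [hx1, hx2]
      · -- x 2 ≠ 0 : A₁(A₂(A₂ᴴ x)) = (sC*sC*x 2) • e₂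
        apply key2
        have h := h1 _ (h2 _ (h2s _ hxK))
        rw [mv2h, mv2, mv1] at h
        refine extract (sC * sC * x 2) _ (by
          exact mul_ne_zero (mul_ne_zero sC_ne sC_ne) hx2) ?_
        convert h using 1
        funext i; fin_cases i <;> simp <;> ring
    · -- x 1 ≠ 0 : A₂(A₁(A₁ᴴ x)) = (sC*sC*x 1) • e₁
      apply key1
      have h := h2 _ (h1 _ (h1s _ hxK))
      rw [mv1h, mv1, mv2] at h
      refine extract (sC * sC * x 1) _ (by
        exact mul_ne_zero (mul_ne_zero sC_ne sC_ne) hx1) ?_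
      convert h using 1
      funext i; fin_cases i <;> simp <;> ring
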